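/- arXiv:2302.00135 — 6 statements merged into one kernel-verified Lean document; each statement's English description precedes it below -/
import Mathlib

section
/- If f : ℕ → S is a function (the state of an object over discrete time) such that f t₁ = f t₂ whenever no 'change event' occurs in (t₁, t₂], and a load at time t₁ returns state x with sequence number x.seq, and a store-conditional at time t₂ > t₁ succeeds only when the current sequence number equals x.seq, and every change event strictly increases the sequence number, then: a successful store-conditional at t₂ implies the state is constant (equal to x) on the interval [t₁, t₂). -/
/-- An LL/SC object modeled as a state-valued function of discrete time.
If the state only changes at `change` events, every change strictly increases
the sequence number, a load at `t₁` returned state `x`, and a store-conditional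
at `t₂ > t₁` succeeded (i.e. the sequence number at `t₂` equals `seqn x`),
then the state is constant (equal to `x`) on `[t₁, t₂)`. -/
theorem stmt0 {S : Type*} (f : ℕ → S) (seqn : S → ℕ) (change : ℕ → Prop)
    (hstep : ∀ u, ¬ change (u + 1) → f (u + 1) = f u)
    (hinc : ∀ u, change (u + 1) → seqn (f (u + 1)) > seqn (f u))
    (t₁ t₂ : ℕ) (x : S) (hload : f t₁ = x) (hlt : t₁ < t₂)
    (hsuccess : seqn (f t₂) = seqn x) :
    ∀ u, t₁ ≤ u → u < t₂ → f u = x := by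
  have mono : ∀ a b : ℕ, a ≤ b → seqn (f a) ≤ seqn (f b) := by
    intro a b hab
    induction b with
    | zero => simp [Nat.le_zero.mp hab]
    | succ n ih =>
      rcases Nat.lt_or_ge a (n + 1) with h | h
      · have h1 : seqn (f a) ≤ seqn (f n) := ih (by omega)
        by_cases hc : change (n + 1)
        · exact h1.trans (le_of_lt (hinc n hc))
        · rw [hstep n hc]; exact h1
      · have : a = n + 1 := le_antisymm hab h
        subst this; exact le_refl _
  intro u hu hlt2
  induction u with
  | zero =>
    have : t₁ = 0 := Nat.le_zero.mp hu
    subst this; exact hload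
  | succ n ih =>
    rcases Nat.lt_or_ge t₁ (n + 1) with h | h
    · have hn : f n = x := ih (by omega) (by omega)
      by_cases hc : change (n + 1)
      · exfalso
        have h1 := hinc n hc
        have h2 : seqn (f (n + 1)) ≤ seqn (f t₂) := mono _ _ (by omega)
        have h3 : seqn (f t₁) ≤ seqn (f n) := mono _ _ (by omega)
        rw [hload] at h3
        rw [hsuccess] at h2
        omega
      · rw [hstep n hc, hn]
    · have : t₁ = n + 1 := le_antisymm hu h
      subst this; exact hload
end

section
/- Let I, M ⊆ ℕ be disjoint finite sets (install times and move times) with the properties: (a) every move m ∈ M has a witness time t < m with parity(I, t) ≠ parity(M, t) and no elements of I ∪ M in [t, m); (b) every install i ∈ I has a witness time t < i with parity(I, t) = parity(M, t) and no elements of I ∪ M in [t, i); where parity(S, t) = (|{s ∈ S : s < t}| mod 2). Then the elements of I and M strictly alternate: between any two elements of M there is an element of I, and between any two elements of I there is an element of M. -/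
/-- parity of the number of events of `S` occurring strictly before time `t`. -/
def parity (S : Finset ℕ) (t : ℕ) : ℕ := (S.filter (fun s => s < t)).card % 2

lemma filter_lt_congr (S : Finset ℕ) {a b : ℕ} (hab : a ≤ b)
    (h : ∀ u, a ≤ u → u < b → u ∉ S) :
    S.filter (fun s => s < b) = S.filter (fun s => s < a) := by
  ext s
  simp only [Finset.mem_filter]
  constructor
  · rintro ⟨hs, hsb⟩
    refine ⟨hs, ?_⟩
    by_contra h'
    exact h s (le_of_not_gt h') hsb hs
  · rintro ⟨hs, hsa⟩
    exact ⟨hs, lt_of_lt_of_le hsa hab⟩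

lemma parity_congr (S : Finset ℕ) {a b : ℕ} (hab : a ≤ b)
    (h : ∀ u, a ≤ u → u < b → u ∉ S) : parity S b = parity S a := by
  unfold parity
  rw [filter_lt_congr S hab h]

lemma card_flip (S : Finset ℕ) {x : ℕ} (hx : x ∈ S) :
    (S.filter (fun s => s < x + 1)).card = (S.filter (fun s => s < x)).card + 1 := by
  have hins : S.filter (fun s => s < x + 1) = insert x (S.filter (fun s => s < x)) := by
    ext s
    simp only [Finset.mem_filter, Finset.mem_insert]
    constructor
    · rintro ⟨hs, h1⟩
      rcases Nat.lt_or_ge s x with h' | h'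
      · exact Or.inr ⟨hs, h'⟩
      · exact Or.inl (by omega)
    · rintro (rfl | ⟨hs, h'⟩)
      · exact ⟨hx, by omega⟩
      · exact ⟨hs, by omega⟩
  rw [hins, Finset.card_insert_of_notMem (by simp)]

lemma parity_noflip (S : Finset ℕ) {x : ℕ} (hx : x ∉ S) :
    parity S (x + 1) = parity S x :=
  parity_congr S (by omega) (fun u h1 h2 => by
    have h3 : u = x := by omega
    exact h3 ▸ hx)

/-- Installs and moves strictly alternate: if every move `m ∈ M` has a witness
time `t < m` with unequal parities and no events of `I ∪ M` in `[t, m)`, and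
every install `i ∈ I` has a witness time `t < i` with equal parities and no
events of `I ∪ M` in `[t, i)`, then between any two moves there is an install
and between any two installs there is a move. -/
theorem stmt3 (I M : Finset ℕ) (hdisj : Disjoint I M)
    (ha : ∀ m ∈ M, ∃ t, t < m ∧ parity I t ≠ parity M t ∧
      ∀ u, t ≤ u → u < m → u ∉ I ∧ u ∉ M)
    (hb : ∀ i ∈ I, ∃ t, t < i ∧ parity I t = parity M t ∧
      ∀ u, t ≤ u → u < i → u ∉ I ∧ u ∉ M) :
    (∀ m₁ ∈ M, ∀ m₂ ∈ M, m₁ < m₂ → ∃ i ∈ I, m₁ < i ∧ i < m₂) ∧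
    (∀ i₁ ∈ I, ∀ i₂ ∈ I, i₁ < i₂ → ∃ m ∈ M, i₁ < m ∧ m < i₂) := by
  constructor
  · intro m₁ hm₁ m₂ hm₂ hlt
    by_contra hcon
    push_neg at hcon
    -- largest element of M in [m₁, m₂)
    set T := M.filter (fun x => m₁ ≤ x ∧ x < m₂) with hT
    have hne : T.Nonempty := ⟨m₁, by simp [hT, hm₁, hlt]⟩
    set m := T.max' hne with hm
    have hmT : m ∈ T := T.max'_mem hne
    simp only [hT, Finset.mem_filter] at hmT
    obtain ⟨hmM, hm₁m, hmm₂⟩ := hmT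
    have hmax : ∀ x ∈ M, m < x → ¬ x < m₂ := by
      intro x hx h1 h2
      have : x ∈ T := by simp [hT, hx, h2]; omega
      have := T.le_max' x this
      omega
    -- witness for m₂
    obtain ⟨t₂, ht₂, hp₂, hgap₂⟩ := ha m₂ hm₂
    have hmt₂ : m < t₂ := by
      by_contra h'
      exact (hgap₂ m (le_of_not_gt h') hmm₂).2 hmM
    -- no events in [m+1, t₂)
    have hstab : ∀ u, m + 1 ≤ u → u < t₂ → u ∉ I ∧ u ∉ M := by
      intro u h1 h2
      constructor
      · intro hu
        exact absurd (hcon u hu (by omega)) (by omega)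
      · intro hu
        exact hmax u hu (by omega) (by omega)
    have hIeq : parity I t₂ = parity I (m + 1) :=
      parity_congr I (by omega) (fun u h1 h2 => (hstab u h1 h2).1)
    have hMeq : parity M t₂ = parity M (m + 1) :=
      parity_congr M (by omega) (fun u h1 h2 => (hstab u h1 h2).2)
    -- witness for m
    obtain ⟨t, ht, hp, hgap⟩ := ha m hmM
    have hIm : parity I m = parity I t :=
      parity_congr I (le_of_lt ht) (fun u h1 h2 => (hgap u h1 h2).1)
    have hMm : parity M m = parity M t :=
      parity_congr M (le_of_lt ht) (fun u h1 h2 => (hgap u h1 h2).2)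
    have hmI : m ∉ I := fun h => (Finset.disjoint_left.mp hdisj h) hmM
    have hInf : parity I (m + 1) = parity I m := parity_noflip I hmI
    have hMfl : (M.filter (fun s => s < m + 1)).card
        = (M.filter (fun s => s < m)).card + 1 := card_flip M hmM
    unfold parity at *
    omega
  · intro i₁ hi₁ i₂ hi₂ hlt
    by_contra hcon
    push_neg at hcon
    set T := I.filter (fun x => i₁ ≤ x ∧ x < i₂) with hT
    have hne : T.Nonempty := ⟨i₁, by simp [hT, hi₁, hlt]⟩
    set i := T.max' hne with hi
    have hiT : i ∈ T := T.max'_mem hne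
    simp only [hT, Finset.mem_filter] at hiT
    obtain ⟨hiI, hi₁i, hii₂⟩ := hiT
    have hmax : ∀ x ∈ I, i < x → ¬ x < i₂ := by
      intro x hx h1 h2
      have : x ∈ T := by simp [hT, hx, h2]; omega
      have := T.le_max' x this
      omega
    obtain ⟨t₂, ht₂, hp₂, hgap₂⟩ := hb i₂ hi₂
    have hit₂ : i < t₂ := by
      by_contra h'
      exact (hgap₂ i (le_of_not_gt h') hii₂).1 hiI
    have hstab : ∀ u, i + 1 ≤ u → u < t₂ → u ∉ I ∧ u ∉ M := by
      intro u h1 h2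
      constructor
      · intro hu
        exact hmax u hu (by omega) (by omega)
      · intro hu
        exact absurd (hcon u hu (by omega)) (by omega)
    have hIeq : parity I t₂ = parity I (i + 1) :=
      parity_congr I (by omega) (fun u h1 h2 => (hstab u h1 h2).1)
    have hMeq : parity M t₂ = parity M (i + 1) :=
      parity_congr M (by omega) (fun u h1 h2 => (hstab u h1 h2).2)
    obtain ⟨t, ht, hp, hgap⟩ := hb i hiI
    have hIm : parity I i = parity I t :=
      parity_congr I (le_of_lt ht) (fun u h1 h2 => (hgap u h1 h2).1)
    have hMm : parity M i = parity M t :=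
      parity_congr M (le_of_lt ht) (fun u h1 h2 => (hgap u h1 h2).2)
    have hiM : i ∉ M := fun h => (Finset.disjoint_left.mp hdisj hiI) h
    have hMnf : parity M (i + 1) = parity M i := parity_noflip M hiM
    have hIfl : (I.filter (fun s => s < i + 1)).card
        = (I.filter (fun s => s < i)).card + 1 := card_flip I hiI
    unfold parity at *
    omega
end

section
/- Suppose installs and moves strictly alternate starting with an install, wbit = parity(installs), zbit = parity(moves). If an install occurs at time t and the next move after t occurs at time m > t and is preceded by an observation time o < m at which wbit o ≠ zbit o and zbit is constant on [o', m) for some o' ≤ o coinciding with the mover's read of zbit, then o > t. (The mover's read of wbit happens after the install it transfers.) -/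
/-!
Let `A u` and `B u` count the installs and moves before time `u`. Strict alternation starting
with an install forces `B u ≤ A u ≤ B u + 1`, so `wbit o ≠ zbit o` means `A o = B o + 1`: an
install is pending at `o`. Since `zbit` is constant on `[o', m) ⊇ [o, t]`, no move happens in
`[o, t]`; if `o ≤ t`, the install at `t` would then be a second pending install,
`A (t + 1) ≥ B (t + 1) + 2`.
-/

open Finset

def countBefore (S : Finset ℕ) (u : ℕ) : ℕ := #{s ∈ S | s < u}

lemma parity_eq_countBefore_mod_two (S : Finset ℕ) (u : ℕ) :
    parity S u = countBefore S u % 2 := rfl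

lemma countBefore_eq_add {S : Finset ℕ} {u v : ℕ} (huv : u ≤ v) :
    countBefore S v = countBefore S u + #{s ∈ S | u ≤ s ∧ s < v} := by
  unfold countBefore
  rw [← card_filter_add_card_filter_not (s := {s ∈ S | s < v}) (fun s => s < u),
    filter_filter, filter_filter]
  congr 2 <;> ext x <;> simp only [mem_filter] <;> grind

lemma countBefore_lt_countBefore {S : Finset ℕ} {s u v : ℕ} (hs : s ∈ S) (hus : u ≤ s)
    (hsv : s < v) : countBefore S u < countBefore S v := by
  rw [countBefore_eq_add (hus.trans hsv.le), Nat.lt_add_right_iff_pos, card_pos]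
  exact ⟨s, mem_filter.2 ⟨hs, hus, hsv⟩⟩

lemma countBefore_eq_of_forall_notMem {S : Finset ℕ} {u v : ℕ} (huv : u ≤ v)
    (hS : ∀ s, u ≤ s → s < v → s ∉ S) : countBefore S v = countBefore S u := by
  rw [countBefore_eq_add huv, add_eq_left, card_eq_zero, filter_eq_empty_iff]
  exact fun s hs ⟨hus, hsv⟩ => hS s hus hsv hs

lemma parity_succ_ne_of_mem {S : Finset ℕ} {s : ℕ} (hs : s ∈ S) :
    parity S (s + 1) ≠ parity S s := by
  have : countBefore S (s + 1) = countBefore S s + 1 := by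
    rw [countBefore_eq_add (Nat.le_succ s), add_right_inj, card_eq_one]
    exact ⟨s, by ext x; simp only [mem_filter, mem_singleton]; grind⟩
  rw [parity_eq_countBefore_mod_two, parity_eq_countBefore_mod_two, this]
  omega

def Separates (T S : Finset ℕ) : Prop :=
  ∀ a ∈ S, ∀ b ∈ S, a < b → ∃ c ∈ T, a < c ∧ c < b

namespace Separates

variable {T S : Finset ℕ}

lemma mono {S' : Finset ℕ} (h : Separates T S) (hS' : S' ⊆ S) : Separates T S' :=
  fun a ha b hb hab => h a (hS' ha) b (hS' hb) hab

lemma strictMonoOn_findGreatest (h : Separates T S) :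
    StrictMonoOn (fun s => Nat.findGreatest (· ∈ T) s) S := by
  intro a ha b hb hab
  obtain ⟨c, hcT, hac, hcb⟩ := h a ha b hb hab
  calc Nat.findGreatest (· ∈ T) a ≤ a := Nat.findGreatest_le a
    _ < c := hac
    _ ≤ Nat.findGreatest (· ∈ T) b := Nat.le_findGreatest hcb.le hcT

/-- Each event of `S` is sent to the last event of `T` preceding it. -/
lemma countBefore_le (h : Separates T S) (hprev : ∀ s ∈ S, ∃ c ∈ T, c < s) (u : ℕ) :
    countBefore S u ≤ countBefore T u := by
  refine card_le_card_of_injOn (fun s => Nat.findGreatest (· ∈ T) s) ?_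
    (h.strictMonoOn_findGreatest.injOn.mono fun s hs => (mem_filter.1 hs).1)
  intro s hs
  simp only [coe_filter, Set.mem_ofPred_eq] at hs ⊢
  obtain ⟨c, hcT, hcs⟩ := hprev s hs.1
  exact ⟨Nat.findGreatest_spec hcs.le hcT, (Nat.findGreatest_le s).trans_lt hs.2⟩

lemma countBefore_le_add_one (h : Separates T S) (u : ℕ) :
    countBefore S u ≤ countBefore T u + 1 := by
  rcases S.eq_empty_or_nonempty with rfl | hne
  · simp [countBefore]
  have hprev : ∀ s ∈ S.erase (S.min' hne), ∃ c ∈ T, c < s := fun s hs =>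
    let ⟨c, hcT, _, hcs⟩ := h _ (S.min'_mem hne) s (mem_of_mem_erase hs)
      (S.min'_lt_of_mem_erase_min' hne hs)
    ⟨c, hcT, hcs⟩
  have hle := (h.mono (erase_subset _ _)).countBefore_le hprev u
  have herase := pred_card_le_card_erase (s := {s ∈ S | s < u}) (a := S.min' hne)
  rw [← filter_erase] at herase
  unfold countBefore at hle ⊢
  omega

end Separates

theorem stmt5_general (I M : Finset ℕ) (hdisj : Disjoint I M)
    (hfirst : ∀ m ∈ M, ∃ i ∈ I, i < m)
    (hMI : ∀ m₁ ∈ M, ∀ m₂ ∈ M, m₁ < m₂ → ∃ i ∈ I, m₁ < i ∧ i < m₂)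
    (hIM : ∀ i₁ ∈ I, ∀ i₂ ∈ I, i₁ < i₂ → ∃ m ∈ M, i₁ < m ∧ m < i₂)
    (t m o : ℕ) (htI : t ∈ I) (htm : t < m)
    (hobs : parity I o ≠ parity M o)
    (hzconst : ∃ o', o' ≤ o ∧ ∀ u, o' ≤ u → u < m → parity M u = parity M o') :
    o > t := by
  obtain ⟨o', ho'o, hconst⟩ := hzconst
  by_contra! hot
  have hquiet : ∀ s, o ≤ s → s < t + 1 → s ∉ M := fun s hos hst₁ hs => by
    have hst : s < t := lt_of_le_of_ne (by omega) fun h => disjoint_left.1 hdisj htI (h ▸ hs)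
    exact parity_succ_ne_of_mem hs <| (hconst (s + 1) (by omega) (by omega)).trans
      (hconst s (by omega) (by omega)).symm
  have hB : countBefore M (t + 1) = countBefore M o :=
    countBefore_eq_of_forall_notMem (by omega) hquiet
  have hA : countBefore I o < countBefore I (t + 1) :=
    countBefore_lt_countBefore htI hot (by omega)
  have hlow := Separates.countBefore_le hMI hfirst o
  have hhigh := Separates.countBefore_le_add_one hIM o
  have hhigh' := Separates.countBefore_le_add_one hIM (t + 1)
  rw [parity_eq_countBefore_mod_two, parity_eq_countBefore_mod_two] at hobs
  omega

/-- The mover's read of `wbit` happens after the install it transfers: under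
strict alternation starting with an install, if an install occurs at `t`, the
next move after `t` occurs at `m`, the mover observed `wbit o ≠ zbit o` at some
`o < m`, and `zbit` is constant on `[o', m)` for some `o' ≤ o` (the mover's read
of `zbit`), then `o > t`. -/
theorem stmt5 (I M : Finset ℕ) (hdisj : Disjoint I M)
    (hfirst : ∀ m ∈ M, ∃ i ∈ I, i < m)
    (hMI : ∀ m₁ ∈ M, ∀ m₂ ∈ M, m₁ < m₂ → ∃ i ∈ I, m₁ < i ∧ i < m₂)
    (hIM : ∀ i₁ ∈ I, ∀ i₂ ∈ I, i₁ < i₂ → ∃ m ∈ M, i₁ < m ∧ m < i₂)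
    (t m o : ℕ) (htI : t ∈ I) (hmM : m ∈ M) (htm : t < m)
    (hnext : ∀ u, t < u → u < m → u ∉ M)
    (hom : o < m)
    (hobs : parity I o ≠ parity M o)
    (hzconst : ∃ o', o' ≤ o ∧ ∀ u, o' ≤ u → u < m → parity M u = parity M o') :
    o > t :=
  stmt5_general I M hdisj hfirst hMI hIM t m o htI htm hobs hzconst
end

section
/- Let b : ℕ → Bool × Bool where b t = (wbit t, zbit t), with bits flipping only at install/move events that strictly alternate. If wbit t ≠ zbit t at some time t, and two 'transfer' attempts are performed, the first over interval [a₁, c₁] with t < a₁, the second over [a₂, c₂] with c₁ < a₂, where a transfer attempt over [a, c] succeeds (causing a move) whenever the bits are unequal and unchanged throughout [a, c], and a failed attempt implies zbit changed during [a, c], then a move occurs in the interval (t, c₂]. -/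
/-- Two consecutive non-overlapping transfer attempts after a time with unequal
bits guarantee a move: suppose `wbit` flips only at installs and `zbit` flips
only at moves, and once the bits are unequal they stay unequal and unchanged
until the next move. If `wbit t ≠ zbit t`, two transfer attempts run over
`[a₁, c₁]` and `[a₂, c₂]` with `t < a₁ ≤ c₁ < a₂ ≤ c₂`, and an attempt over
`[a, c]` succeeds (a move occurs at `c`) whenever the bits are unequal and
unchanged throughout `[a, c]` (a failed attempt meaning `zbit`'s state changed
during the attempt), then a move occurs in `(t, c₂]`. -/
theorem stmt6 (wbit zbit : ℕ → Bool) (Install Move : ℕ → Prop)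
    (hwflip : ∀ u, wbit (u + 1) ≠ wbit u → Install (u + 1))
    (hzflip : ∀ u, zbit (u + 1) ≠ zbit u → Move (u + 1))
    (hstable : ∀ t, wbit t ≠ zbit t → ∀ u, t ≤ u →
      (∀ v, t < v → v ≤ u → ¬ Move v) → wbit u = wbit t ∧ zbit u = zbit t)
    (t a₁ c₁ a₂ c₂ : ℕ)
    (hne : wbit t ≠ zbit t)
    (hta : t < a₁) (hac₁ : a₁ ≤ c₁) (hca : c₁ < a₂) (hac₂ : a₂ ≤ c₂)
    (hsucc₁ : (∀ u, a₁ ≤ u → u ≤ c₁ →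
        wbit u ≠ zbit u ∧ wbit u = wbit a₁ ∧ zbit u = zbit a₁) → Move c₁)
    (hsucc₂ : (∀ u, a₂ ≤ u → u ≤ c₂ →
        wbit u ≠ zbit u ∧ wbit u = wbit a₂ ∧ zbit u = zbit a₂) → Move c₂)
    (hfail₁ : ¬ Move c₁ → ∃ u, a₁ < u ∧ u ≤ c₁ ∧ zbit u ≠ zbit a₁)
    (hfail₂ : ¬ Move c₂ → ∃ u, a₂ < u ∧ u ≤ c₂ ∧ zbit u ≠ zbit a₂) :
    ∃ m, t < m ∧ m ≤ c₂ ∧ Move m := by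
  by_contra h
  push_neg at h
  have hNo : ∀ v, t < v → v ≤ c₂ → ¬ Move v := fun v hv1 hv2 hm => (h v hv1 hv2) hm
  have hst : ∀ u, t ≤ u → u ≤ c₂ → wbit u = wbit t ∧ zbit u = zbit t := by
    intro u hu hu2
    exact hstable t hne u hu (fun v hv1 hv2 => hNo v hv1 (hv2.trans hu2))
  have hM := hsucc₁ (fun u h1 h2 => by
    have hu := hst u (le_of_lt (lt_of_lt_of_le hta h1))
      (h2.trans (le_trans (le_of_lt hca) hac₂))
    have ha := hst a₁ (le_of_lt hta) (le_trans hac₁ (le_trans (le_of_lt hca) hac₂))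
    refine ⟨?_, ?_, ?_⟩
    · rw [hu.1, hu.2]; exact hne
    · rw [hu.1, ha.1]
    · rw [hu.2, ha.2])
  exact hNo c₁ (lt_of_lt_of_le hta hac₁) (le_trans (le_of_lt hca) hac₂) hM
end

section
/- Let changes : ℕ → Option (Bool × V) record at each time either no change or a change event carrying a bit-flip flag and a value. Define val : ℕ → V as the value carried by the most recent change (or the initial value v₀). If a change at time t' carries value v' and flips the bit, and the next bit-flipping change occurs at time t > t' with no non-flipping changes in (t', t), and the change at t was produced by a process that read val at some time r ∈ (t', t) and aborted whenever the read value equalled its input v, then v ≠ v'. (A freshly moved value cannot be immediately re-installed.) -/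
/-- The value carried by the most recent change at a time `≤ t`, or `v₀` if
there has been no change. -/
def valAt {V : Type*} (v₀ : V) (changes : ℕ → Option (Bool × V)) : ℕ → V
  | 0 => match changes 0 with
    | some (_, v) => v
    | none => v₀
  | (t + 1) => match changes (t + 1) with
    | some (_, v) => v
    | none => valAt v₀ changes t

section ValAt

variable {V : Type*} (v₀ : V) (changes : ℕ → Option (Bool × V))

theorem valAt_of_changes_eq_some {t : ℕ} {b : Bool} {v : V}
    (h : changes t = some (b, v)) : valAt v₀ changes t = v := by
  cases t <;> simp [valAt, h]

theorem valAt_succ_of_changes_eq_none {t : ℕ} (h : changes (t + 1) = none) :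
    valAt v₀ changes (t + 1) = valAt v₀ changes t := by
  simp [valAt, h]

theorem valAt_eq_of_forall_changes_eq_none {s u : ℕ} (hsu : s ≤ u)
    (hnone : ∀ w, s < w → w ≤ u → changes w = none) :
    valAt v₀ changes u = valAt v₀ changes s := by
  induction u, hsu using Nat.le_induction with
  | base => rfl
  | succ n hsn ih =>
    rw [valAt_succ_of_changes_eq_none v₀ changes (hnone (n + 1) (by omega) le_rfl),
      ih fun w hsw hwn => hnone w hsw (by omega)]

end ValAt

theorem stmt7_general {V : Type*} (v₀ : V) (changes : ℕ → Option (Bool × V))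
    (t' t r : ℕ) (v v' : V)
    (hmove : changes t' = some (true, v'))
    (hinstall : changes t = some (true, v))
    (hr1 : t' < r) (hr2 : r < t)
    (hnone : ∀ u, t' < u → u < t → changes u = none)
    (habort : valAt v₀ changes r = v → changes t = none) :
    v ≠ v' := by
  have hread : valAt v₀ changes r = v' := by
    rw [valAt_eq_of_forall_changes_eq_none v₀ changes hr1.le
      fun w htw hwr => hnone w htw (hwr.trans_lt hr2)]
    exact valAt_of_changes_eq_some v₀ changes hmove
  rintro rfl
  simp [habort hread] at hinstall

/-- A freshly moved value cannot be immediately re-installed: if a bit-flipping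
change at `t'` carries `v'`, the next bit-flipping change at `t > t'` carries
`v` with no changes in `(t', t)`, and the change at `t` was produced by a
process that read the current value at some `r ∈ (t', t)` and would have
aborted (making no change at `t`) had the read value equalled its input `v`,
then `v ≠ v'`. -/
theorem stmt7 {V : Type*} [DecidableEq V] (v₀ : V) (changes : ℕ → Option (Bool × V))
    (t' t r : ℕ) (v v' : V)
    (hmove : changes t' = some (true, v'))
    (hinstall : changes t = some (true, v))
    (htt : t' < t) (hr1 : t' < r) (hr2 : r < t)
    (hnone : ∀ u, t' < u → u < t → changes u = none)
    (habort : valAt v₀ changes r = v → changes t = none) :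
    v ≠ v' :=
  stmt7_general v₀ changes t' t r v v' hmove hinstall hr1 hr2 hnone habort
end

section
/- Consider a register ℛ whose abstract value equals Z.val at all times, where Z.val changes at moves (to the pending installed value) and at imprints (an imprint with parameters (old, new) occurs only when Z.val = old and old ≠ new, and sets Z.val to new). Prove by induction on linearization times: after processing any prefix of the linearized operation sequence (reads return Z.val at their linearization point; trivial writes write the current value; hitchhiker+installer groups set the value to the installer's value; imprinting CAS(old,new) succeeds; CAS returning false at its linearization point has Z.val ≠ old there), the abstract register value always equals Z.val, and every returned response is consistent with the sequential specification of a CAS-register. -/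
/-- An operation on a CAS-register, together with its response. -/
inductive RegOp (V : Type*) : Type _
  | read (resp : V) : RegOp V
  | write (v : V) : RegOp V
  | cas (old new : V) (resp : Bool) : RegOp V

/-- Sequential specification: whether the response of an operation is legal
when executed at register value `v`. -/
def legal {V : Type*} [DecidableEq V] (v : V) : RegOp V → Prop
  | .read r => r = v
  | .write _ => True
  | .cas old _ r => r = decide (v = old)

/-- Sequential specification: the register value after executing an operation
at register value `v`. -/
def next {V : Type*} [DecidableEq V] (v : V) : RegOp V → V
  | .read _ => v
  | .write w => w
  | .cas old new _ => if v = old then new else v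

/-- The register value after sequentially executing a list of operations. -/
def regValue {V : Type*} [DecidableEq V] (v₀ : V) (l : List (RegOp V)) : V :=
  l.foldl next v₀

/-- The per-event semantics of the linearized operations in terms of `Z.val`:
reads return `Z.val` at their linearization point; writes (trivial writes,
hitchhikers, and installers alike) set `Z.val` to their value; an imprinting
CAS requires `Z.val = old` and sets it to `new`; a CAS returning false has
`Z.val ≠ old` and leaves it unchanged. -/
def stepOK {V : Type*} [DecidableEq V] (zpre zpost : V) : RegOp V → Prop
  | .read r => r = zpre ∧ zpost = zpre
  | .write v => zpost = v
  | .cas old new r =>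
      if r then zpre = old ∧ zpost = new else zpre ≠ old ∧ zpost = zpre


section

variable {V : Type*} [DecidableEq V]

theorem stepOK.eq_next {z z' : V} {op : RegOp V} (h : stepOK z z' op) : z' = next z op := by
  cases op with
  | read r => exact h.2
  | write v => exact h
  | cas old new r =>
    cases r
    · simp only [stepOK, if_false, Bool.false_eq_true] at h
      simp [next, h.1, h.2]
    · simp only [stepOK, if_true] at h
      simp [next, h.1, h.2]

theorem stepOK.legal {z z' : V} {op : RegOp V} (h : stepOK z z' op) : legal z op := by
  cases op with
  | read r => exact h.1
  | write v => trivial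
  | cas old new r =>
    cases r
    · simp only [stepOK, if_false, Bool.false_eq_true] at h
      simp [_root_.legal, h.1]
    · simp only [stepOK, if_true] at h
      simp [_root_.legal, h.1]

theorem regValue_take_succ (v₀ : V) (l : List (RegOp V)) (n : ℕ) (hn : n < l.length) :
    regValue v₀ (l.take (n + 1)) = next (regValue v₀ (l.take n)) (l.get ⟨n, hn⟩) := by
  rw [regValue, regValue, ← List.take_concat_get' l n hn, List.foldl_append]
  rfl

theorem eq_regValue_take_of_stepOK (v₀ : V) (ops : List (RegOp V)) (zval : ℕ → V)
    (h0 : zval 0 = v₀)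
    (hstep : ∀ n (hn : n < ops.length), stepOK (zval n) (zval (n + 1)) (ops.get ⟨n, hn⟩)) :
    ∀ n, n ≤ ops.length → zval n = regValue v₀ (ops.take n)
  | 0, _ => h0
  | n + 1, hn => by
    have ih := eq_regValue_take_of_stepOK v₀ ops zval h0 hstep n (Nat.le_of_succ_le hn)
    rw [regValue_take_succ v₀ ops n hn, ← ih]
    exact (hstep n hn).eq_next

end

/-- If `Z.val` initially equals the register's initial value and evolves
according to the per-event semantics of the linearized operations, then after
processing any prefix of the linearized sequence the abstract register value
equals `Z.val`, and every response is consistent with the sequential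
specification of a CAS-register. -/
theorem stmt15 {V : Type*} [DecidableEq V] (v₀ : V) (ops : List (RegOp V))
    (zval : ℕ → V) (h0 : zval 0 = v₀)
    (hstep : ∀ n (hn : n < ops.length), stepOK (zval n) (zval (n + 1)) (ops.get ⟨n, hn⟩)) :
    (∀ n, n ≤ ops.length → zval n = regValue v₀ (ops.take n)) ∧
    (∀ n (hn : n < ops.length), legal (regValue v₀ (ops.take n)) (ops.get ⟨n, hn⟩)) := by
  have hz := eq_regValue_take_of_stepOK v₀ ops zval h0 hstep
  refine ⟨hz, fun n hn => ?_⟩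
  rw [← hz n hn.le]
  exact (hstep n hn).legal
end
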